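/- For every integer n ≥ 2, the Frobenius norm and spectral norm of Z_n satisfy the strict inequality ‖Z_n‖_F² < ‖Z_n‖₂² + (16/25)(n − 1). -/

import Mathlib

open Matrix

/-- The `n×n` matrix `Z_n` (1-based indices `i' = i+1`, `j' = j+1`). -/
noncomputable def Z (n : ℕ) : Matrix (Fin n) (Fin n) ℝ := fun i j =>
  if i = j then
    1 + ∑ k ∈ Finset.Icc (i.1 + 2) n, ((Nat.fib (k - (i.1 + 1)) : ℝ)) ^ 2
  else if i < j then
    (-1 : ℝ) ^ (j.1 - i.1) * ((Nat.fib (j.1 - i.1) : ℝ) +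
      ∑ k ∈ Finset.Icc (j.1 + 2) n,
        (Nat.fib (k - (i.1 + 1)) : ℝ) * (Nat.fib (k - (j.1 + 1)) : ℝ))
  else
    (-1 : ℝ) ^ (i.1 - j.1) * ((Nat.fib (i.1 - j.1) : ℝ) +
      ∑ k ∈ Finset.Icc (i.1 + 2) n,
        (Nat.fib (k - (i.1 + 1)) : ℝ) * (Nat.fib (k - (j.1 + 1)) : ℝ))

/-- `μ` is an eigenvalue of the real matrix `M`. -/
def HasEigen {n : ℕ} (M : Matrix (Fin n) (Fin n) ℝ) (μ : ℝ) : Prop :=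
  ∃ v : Fin n → ℝ, v ≠ 0 ∧ M.mulVec v = μ • v

/-- The squared Frobenius norm: the sum of the squares of all entries. -/
noncomputable def frobSq {n : ℕ} (M : Matrix (Fin n) (Fin n) ℝ) : ℝ :=
  ∑ i, ∑ j, (M i j) ^ 2

/-- The spectral norm of a real square matrix `M`: its largest singular value,
i.e. the supremum of the square roots of the eigenvalues of `Mᵀ * M`. -/
noncomputable def specNorm {n : ℕ} (M : Matrix (Fin n) (Fin n) ℝ) : ℝ :=
  sSup {s : ℝ | ∃ μ : ℝ, HasEigen (Mᵀ * M) μ ∧ s = Real.sqrt μ}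

namespace StmtAux

open Finset

noncomputable def φ : ℝ := (1 + Real.sqrt 5) / 2
noncomputable def ψ : ℝ := (Real.sqrt 5 - 1) / 2

lemma sqrt5_sq : Real.sqrt 5 ^ 2 = 5 := Real.sq_sqrt (by norm_num)
lemma sqrt5_gt : (2 : ℝ) < Real.sqrt 5 := by
  nlinarith [sqrt5_sq, Real.sqrt_nonneg 5]

lemma phi_psi : φ * ψ = 1 := by
  unfold φ ψ; nlinarith [sqrt5_sq]

lemma one_add_psi : 1 + ψ = φ := by unfold φ ψ; ring

noncomputable def pseq (X : ℕ → ℝ) : ℕ → ℝ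
  | 0 => 0
  | 1 => 0
  | (k+2) => -pseq X (k+1) + pseq X k - X (k+1)

noncomputable def Vf (q r : ℝ) : ℝ := -(2/5)*r^2 + (8/5)*r*q + (2/5)*q^2

lemma pseq_zero (X : ℕ → ℝ) : pseq X 0 = 0 := rfl
lemma pseq_one (X : ℕ → ℝ) : pseq X 1 = 0 := rfl
lemma pseq_rec (X : ℕ → ℝ) (k : ℕ) :
    pseq X (k+2) = -pseq X (k+1) + pseq X k - X (k+1) := rfl

lemma telescope (X : ℕ → ℝ) (m : ℕ) :
    ∑ k ∈ range m, ((4/5)*X (k+1)^2 - (X (k+1) + pseq X (k+1))^2)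
      = ∑ k ∈ range m, (1/5)*(X (k+1) + pseq X (k+1) - 2*pseq X k)^2
        + Vf (pseq X m) (pseq X (m+1)) := by
  induction m with
  | zero => simp [pseq_zero, pseq_one, Vf]
  | succ m ih =>
    rw [sum_range_succ, sum_range_succ, ih, pseq_rec]
    unfold Vf
    ring

lemma Hclosed (X : ℕ → ℝ) (m : ℕ) :
    pseq X (m+1) - ψ * pseq X m
      = -∑ k ∈ range m, (-φ)^(m-1-k) * X (k+1) := by
  induction m with
  | zero => simp [pseq_zero, pseq_one]
  | succ m ih =>
    have hrec : pseq X (m+2) - ψ * pseq X (m+1)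
        = -φ * (pseq X (m+1) - ψ * pseq X m) - X (m+1) := by
      rw [pseq_rec]
      have h1 := phi_psi
      have h2 := one_add_psi
      linear_combination (-pseq X (m+1)) * h2 - pseq X m * h1
    rw [hrec, ih, sum_range_succ]
    have hpt : ∀ k ∈ range m, (-φ)^(m + 1 - 1 - k) * X (k+1)
        = -(φ * ((-φ)^(m-1-k) * X (k+1))) := by
      intro k hk
      rw [mem_range] at hk
      have : m + 1 - 1 - k = (m - 1 - k) + 1 := by omega
      rw [this, pow_succ]
      ring
    rw [sum_congr rfl hpt]
    have : m + 1 - 1 - m = 0 := by omega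
    rw [this, pow_zero, Finset.sum_neg_distrib, ← Finset.mul_sum]
    ring

lemma core (n : ℕ) (X : ℕ → ℝ)
    (hc : ∑ k ∈ range n, (-φ)^(n-1-k) * X (k+1) = 0)
    (hne : ∃ k, k < n ∧ X (k+1) ≠ 0) :
    ∑ k ∈ range n, (X (k+1) + pseq X (k+1))^2 < 4/5 * ∑ k ∈ range n, X (k+1)^2 := by
  have htel := telescope X n
  have hH := Hclosed X n
  rw [hc, neg_zero, sub_eq_zero] at hH
  have hV : Vf (pseq X n) (pseq X (n+1)) = (Real.sqrt 5 - 1) * (pseq X n)^2 := by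
    rw [hH]; unfold Vf ψ; nlinarith [sqrt5_sq]
  have hVnn : 0 ≤ Vf (pseq X n) (pseq X (n+1)) := by
    rw [hV]
    have : (0:ℝ) ≤ Real.sqrt 5 - 1 := by nlinarith [sqrt5_gt]
    positivity
  have hs : 0 < ∑ k ∈ range n, (1/5)*(X (k+1) + pseq X (k+1) - 2*pseq X k)^2 := by
    rcases hne with ⟨k0, hk0, hX0⟩
    have hnn : ∀ k ∈ range n, (0:ℝ) ≤ (1/5)*(X (k+1) + pseq X (k+1) - 2*pseq X k)^2 := by
      intro k _; positivity
    rcases (Finset.sum_nonneg hnn).lt_or_eq with h | h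
    · exact h
    · exfalso
      have hz := (Finset.sum_eq_zero_iff_of_nonneg hnn).mp h.symm
      have hXk : ∀ k, k < n → X (k+1) = 2*pseq X k - pseq X (k+1) := by
        intro k hk
        have := hz k (mem_range.mpr hk)
        have h2 : (X (k+1) + pseq X (k+1) - 2*pseq X k)^2 = 0 := by linarith
        have h3 : X (k+1) + pseq X (k+1) - 2*pseq X k = 0 :=
          pow_eq_zero_iff (by norm_num) |>.mp h2
        linarith
      have hp0 : ∀ m, m ≤ n + 1 → pseq X m = 0 := by
        intro m
        induction m using Nat.strong_induction_on with
        | _ m IH =>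
          intro hm
          match m with
          | 0 => exact pseq_zero X
          | 1 => exact pseq_one X
          | (k+2) =>
            have hk : k < n := by omega
            rw [pseq_rec, hXk k hk, IH k (by omega) (by omega),
              IH (k+1) (by omega) (by omega)]
            ring
      have : X (k0+1) = 0 := by
        rw [hXk k0 hk0, hp0 k0 (by omega), hp0 (k0+1) (by omega)]; ring
      exact hX0 this
  have hsum : ∑ k ∈ range n, ((4/5)*X (k+1)^2 - (X (k+1) + pseq X (k+1))^2)
      = 4/5 * ∑ k ∈ range n, X (k+1)^2 - ∑ k ∈ range n, (X (k+1) + pseq X (k+1))^2 := by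
    rw [Finset.sum_sub_distrib, Finset.mul_sum]
  linarith [htel, hsum, hs, hVnn]

def Bent (m j : ℕ) : ℝ :=
  if m = j then 1 else if j < m then (-1)^(m-j) * (Nat.fib (m-j) : ℝ) else 0

def B (n : ℕ) : Matrix (Fin n) (Fin n) ℝ := fun i j => Bent i.1 j.1

lemma Bent_self (m : ℕ) : Bent m m = 1 := by simp [Bent]

lemma Bent_lt {j m : ℕ} (h : j < m) : Bent m j = (-1)^(m-j) * (Nat.fib (m-j) : ℝ) := by
  unfold Bent
  rw [if_neg (by omega : ¬ m = j), if_pos h]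

lemma Bent_gt {j m : ℕ} (h : m < j) : Bent m j = 0 := by
  unfold Bent
  rw [if_neg (by omega : ¬ m = j), if_neg (by omega : ¬ j < m)]

lemma Zsymm (n : ℕ) (i j : Fin n) : Z n j i = Z n i j := by
  rcases lt_trichotomy i j with h | h | h
  · show (if j = i then _ else if j < i then _ else _)
        = (if i = j then _ else if i < j then _ else _)
    rw [if_neg (ne_of_gt h), if_neg (not_lt_of_gt h), if_neg (ne_of_lt h), if_pos h]
    congr 1
    congr 1
    exact Finset.sum_congr rfl fun k _ => mul_comm _ _
  · rw [h]
  · show (if j = i then _ else if j < i then _ else _)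
        = (if i = j then _ else if i < j then _ else _)
    rw [if_neg (ne_of_lt h), if_pos h, if_neg (ne_of_gt h), if_neg (not_lt_of_gt h)]
    congr 1
    congr 1
    exact Finset.sum_congr rfl fun k _ => mul_comm _ _

lemma neg_one_sq_pow (d : ℕ) : ((-1:ℝ)^d) * ((-1:ℝ)^d) = 1 := by
  rw [← pow_add]
  exact Even.neg_one_pow ⟨d, rfl⟩

lemma Bent_pt_diag (i m : ℕ) :
    Bent m i * Bent m i
      = (if m = i then (1:ℝ) else 0)
        + (if i + 1 ≤ m then ((Nat.fib (m-i) : ℝ))^2 else 0) := by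
  rcases Nat.lt_trichotomy m i with h | h | h
  · rw [Bent_gt h, if_neg (by omega), if_neg (by omega)]
    ring
  · subst h
    rw [Bent_self, if_pos rfl, if_neg (by omega)]
    ring
  · rw [Bent_lt h, if_neg (by omega), if_pos (by omega)]
    have h1 := neg_one_sq_pow (m - i)
    linear_combination ((Nat.fib (m-i) : ℝ))^2 * h1

lemma Bent_pt_off (i j m : ℕ) (hij : i < j) :
    Bent m i * Bent m j
      = (if m = j then (-1:ℝ)^(j-i) * (Nat.fib (j-i) : ℝ) else 0)
        + (if j + 1 ≤ m then (-1:ℝ)^(j-i) * ((Nat.fib (m-i) : ℝ) * (Nat.fib (m-j) : ℝ)) else 0) := by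
  rcases Nat.lt_trichotomy m j with h | h | h
  · rw [Bent_gt h, if_neg (by omega), if_neg (by omega)]
    ring
  · subst h
    rw [Bent_self, Bent_lt hij, if_pos rfl, if_neg (by omega)]
    ring
  · have h2 : i < m := by omega
    rw [Bent_lt h2, Bent_lt h, if_neg (by omega), if_pos (by omega)]
    have hsplit : m - i = (m - j) + (j - i) := by omega
    rw [hsplit, pow_add]
    have h1 := neg_one_sq_pow (m - j)
    linear_combination ((-1:ℝ)^(j-i) * (Nat.fib (m - j + (j - i)) : ℝ) * (Nat.fib (m-j) : ℝ)) * h1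

lemma ite_sum_shift (n c : ℕ) (f g : ℕ → ℝ) (hc : ∀ k, f (c + 1 + k) = g (c + 2 + k)) :
    ∑ m ∈ range n, (if c + 1 ≤ m then f m else 0)
      = ∑ k ∈ Finset.Icc (c + 2) n, g k := by
  rw [← Finset.sum_filter]
  have hfil : (range n).filter (fun m => c + 1 ≤ m) = Finset.Ico (c+1) n := by
    ext m
    simp only [Finset.mem_filter, Finset.mem_range, Finset.mem_Ico]
    omega
  rw [hfil, ← Finset.Ico_add_one_right_eq_Icc, Finset.sum_Ico_eq_sum_range, Finset.sum_Ico_eq_sum_range]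
  have hlen : n + 1 - (c + 2) = n - (c + 1) := by omega
  rw [hlen]
  exact Finset.sum_congr rfl fun k _ => hc k

lemma sum_Bent_diag (n i : ℕ) (hi : i < n) :
    ∑ m ∈ range n, Bent m i * Bent m i
      = 1 + ∑ k ∈ Finset.Icc (i+2) n, ((Nat.fib (k-(i+1)) : ℝ))^2 := by
  have h1 : ∀ m ∈ range n, Bent m i * Bent m i
      = (if m = i then (1:ℝ) else 0) + (if i + 1 ≤ m then ((Nat.fib (m-i) : ℝ))^2 else 0) :=
    fun m _ => Bent_pt_diag i m
  rw [Finset.sum_congr rfl h1, Finset.sum_add_distrib, Finset.sum_ite_eq',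
    if_pos (Finset.mem_range.mpr hi)]
  congr 1
  apply ite_sum_shift
  intro k
  have e : i + 1 + k - i = i + 2 + k - (i + 1) := by omega
  rw [e]

lemma sum_Bent_off (n i j : ℕ) (hij : i < j) (hj : j < n) :
    ∑ m ∈ range n, Bent m i * Bent m j
      = (-1:ℝ)^(j-i) * ((Nat.fib (j-i) : ℝ)
          + ∑ k ∈ Finset.Icc (j+2) n, (Nat.fib (k-(i+1)) : ℝ) * (Nat.fib (k-(j+1)) : ℝ)) := by
  have h1 : ∀ m ∈ range n, Bent m i * Bent m j
      = (if m = j then (-1:ℝ)^(j-i) * (Nat.fib (j-i) : ℝ) else 0)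
        + ((-1:ℝ)^(j-i) * if j + 1 ≤ m then ((Nat.fib (m-i) : ℝ) * (Nat.fib (m-j) : ℝ)) else 0) := by
    intro m _
    rw [Bent_pt_off i j m hij]
    by_cases hc : j + 1 ≤ m <;> simp [hc]
  rw [Finset.sum_congr rfl h1, Finset.sum_add_distrib, Finset.sum_ite_eq',
    if_pos (Finset.mem_range.mpr hj), ← Finset.mul_sum]
  rw [mul_add]
  congr 1
  congr 1
  apply ite_sum_shift
  intro k
  have e1 : j + 1 + k - i = j + 2 + k - (i + 1) := by omega
  have e2 : j + 1 + k - j = j + 2 + k - (j + 1) := by omega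
  rw [e1, e2]

lemma sumB_eq (n : ℕ) (i j : Fin n) (hij : i.1 ≤ j.1) :
    ∑ k : Fin n, B n k i * B n k j = Z n i j := by
  have hr : ∑ k : Fin n, B n k i * B n k j = ∑ m ∈ range n, Bent m i.1 * Bent m j.1 :=
    Fin.sum_univ_eq_sum_range (fun m => Bent m i.1 * Bent m j.1) n
  rcases Nat.lt_or_ge i.1 j.1 with h | h
  · have hne : i ≠ j := fun he => by simp [he] at h
    have hlt : i < j := h
    rw [hr, sum_Bent_off n i.1 j.1 h j.isLt]
    show _ = (if i = j then _ else if i < j then _ else _)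
    rw [if_neg hne, if_pos hlt]
  · have he : i = j := Fin.ext (le_antisymm hij h)
    subst he
    rw [hr, sum_Bent_diag n i.1 i.isLt]
    show _ = (if i = i then _ else _)
    rw [if_pos rfl]

lemma ZeqBtB (n : ℕ) : Z n = (B n)ᵀ * (B n) := by
  ext i j
  rw [Matrix.mul_apply]
  simp only [Matrix.transpose_apply]
  rcases le_or_gt i.1 j.1 with h | h
  · exact (sumB_eq n i j h).symm
  · calc Z n i j = Z n j i := Zsymm n j i
      _ = ∑ k : Fin n, B n k j * B n k i := (sumB_eq n j i h.le).symm
      _ = ∑ k : Fin n, B n k i * B n k j := Finset.sum_congr rfl fun k _ => mul_comm _ _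

/-- extension of a `Fin n` vector to `ℕ`, 1-based -/
def Xext (n : ℕ) (x : Fin n → ℝ) : ℕ → ℝ := fun m =>
  if h : 1 ≤ m ∧ m ≤ n then x ⟨m - 1, by omega⟩ else 0

lemma Xext_val (n : ℕ) (x : Fin n → ℝ) (k : Fin n) : Xext n x (k.1 + 1) = x k := by
  unfold Xext
  rw [dif_pos ⟨by omega, by omega⟩]
  congr 1

lemma pclosed (X : ℕ → ℝ) (m : ℕ) :
    pseq X (m+1) = ∑ j ∈ range m, (-1:ℝ)^(m-j) * (Nat.fib (m-j) : ℝ) * X (j+1) := by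
  induction m using Nat.twoStepInduction with
  | zero => simp [pseq]
  | one =>
    show pseq X 2 = _
    rw [pseq_rec]
    simp [pseq]
  | more m IH1 IH2 =>
    rw [show m + 2 + 1 = (m+1) + 2 from rfl, pseq_rec, sum_range_succ]
    have hsplit : ∀ j ∈ range (m+1),
        (-1:ℝ)^(m+2-j) * (Nat.fib (m+2-j) : ℝ) * X (j+1)
          = -((-1:ℝ)^(m+1-j) * (Nat.fib (m+1-j) : ℝ) * X (j+1))
            + (-1:ℝ)^(m-j) * (Nat.fib (m-j) : ℝ) * X (j+1) := by
      intro j hj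
      rw [mem_range] at hj
      have e1 : m + 2 - j = (m - j) + 2 := by omega
      have e2 : m + 1 - j = (m - j) + 1 := by omega
      rw [e1, e2, Nat.fib_add_two]
      push_cast
      ring
    rw [Finset.sum_congr rfl hsplit, Finset.sum_add_distrib, Finset.sum_neg_distrib]
    have h2 : ∑ j ∈ range (m+1), (-1:ℝ)^(m-j) * (Nat.fib (m-j) : ℝ) * X (j+1)
        = ∑ j ∈ range m, (-1:ℝ)^(m-j) * (Nat.fib (m-j) : ℝ) * X (j+1) := by
      rw [sum_range_succ]
      simp
    rw [h2, ← IH1, ← IH2]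
    have e3 : m + 2 - (m+1) = 1 := by omega
    rw [e3]
    simp [Nat.fib_one]
    ring

lemma mulVecB (n : ℕ) (x : Fin n → ℝ) (k : Fin n) :
    (B n).mulVec x k = Xext n x (k.1 + 1) + pseq (Xext n x) (k.1 + 1) := by
  have hmv : (B n).mulVec x k = ∑ j : Fin n, Bent k.1 j.1 * Xext n x (j.1 + 1) := by
    unfold Matrix.mulVec dotProduct
    exact Finset.sum_congr rfl fun j _ => by rw [Xext_val]; rfl
  rw [hmv, Fin.sum_univ_eq_sum_range (fun m => Bent k.1 m * Xext n x (m + 1)) n]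
  have hpt : ∀ m ∈ range n, Bent k.1 m * Xext n x (m+1)
      = (if m = k.1 then Xext n x (m+1) else 0)
        + (if m < k.1 then (-1:ℝ)^(k.1-m) * (Nat.fib (k.1-m) : ℝ) * Xext n x (m+1) else 0) := by
    intro m _
    rcases Nat.lt_trichotomy m k.1 with h | h | h
    · rw [Bent_lt h, if_neg (by omega), if_pos h]; ring
    · subst h
      rw [Bent_self, if_pos rfl, if_neg (by omega)]; ring
    · rw [Bent_gt h, if_neg (by omega), if_neg (by omega)]; ring
  rw [Finset.sum_congr rfl hpt, Finset.sum_add_distrib, Finset.sum_ite_eq',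
    if_pos (Finset.mem_range.mpr k.isLt)]
  congr 1
  rw [← Finset.sum_filter]
  have hfil : (range n).filter (fun m => m < k.1) = range k.1 := by
    ext m
    simp only [Finset.mem_filter, Finset.mem_range]
    omega
  rw [hfil, pclosed]

lemma QF_eq (n : ℕ) (x : Fin n → ℝ) :
    x ⬝ᵥ (Z n).mulVec x = ((B n).mulVec x) ⬝ᵥ ((B n).mulVec x) := by
  rw [ZeqBtB n, ← Matrix.mulVec_mulVec, dotProduct_mulVec, Matrix.vecMul_transpose]

lemma QF_nonneg (n : ℕ) (x : Fin n → ℝ) : 0 ≤ x ⬝ᵥ (Z n).mulVec x := by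
  rw [QF_eq]
  exact Finset.sum_nonneg fun k _ => mul_self_nonneg _

lemma keyQF (n : ℕ) (x : Fin n → ℝ) (hx : x ≠ 0)
    (ha : ∑ k : Fin n, (-φ)^(n - 1 - k.1) * x k = 0) :
    x ⬝ᵥ (Z n).mulVec x < 4/5 * (x ⬝ᵥ x) := by
  have hXv : ∀ k : Fin n, Xext n x (k.1 + 1) = x k := fun k => Xext_val n x k
  have hq : x ⬝ᵥ (Z n).mulVec x
      = ∑ m ∈ range n, (Xext n x (m+1) + pseq (Xext n x) (m+1))^2 := by
    rw [QF_eq, ← Fin.sum_univ_eq_sum_range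
      (fun m => (Xext n x (m+1) + pseq (Xext n x) (m+1))^2) n]
    unfold dotProduct
    refine Finset.sum_congr rfl fun k _ => ?_
    rw [mulVecB]
    ring
  have hx2 : x ⬝ᵥ x = ∑ m ∈ range n, Xext n x (m+1)^2 := by
    rw [← Fin.sum_univ_eq_sum_range (fun m => Xext n x (m+1)^2) n]
    unfold dotProduct
    refine Finset.sum_congr rfl fun k _ => ?_
    rw [← hXv k]
    ring
  have hc : ∑ k ∈ range n, (-φ)^(n-1-k) * Xext n x (k+1) = 0 := by
    rw [← Fin.sum_univ_eq_sum_range (fun m => (-φ)^(n-1-m) * Xext n x (m+1)) n, ← ha]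
    exact Finset.sum_congr rfl fun k _ => by rw [hXv k]
  have hne : ∃ k, k < n ∧ Xext n x (k+1) ≠ 0 := by
    have hex : ∃ k : Fin n, x k ≠ 0 := by
      by_contra h; push_neg at h; exact hx (funext fun k => h k)
    obtain ⟨k, hk⟩ := hex
    exact ⟨k.1, k.isLt, by rw [hXv k]; exact hk⟩
  rw [hq, hx2]
  exact core n (Xext n x) hc hne

lemma eig_bound {n : ℕ} (M : Matrix (Fin n) (Fin n) ℝ) (μ : ℝ) (h : HasEigen M μ) :
    μ ≤ ∑ j, ∑ k, |M j k| := by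
  obtain ⟨v, hv, heq⟩ := h
  have hex : ∃ j : Fin n, v j ≠ 0 := by
    by_contra hc; push_neg at hc; exact hv (funext hc)
  obtain ⟨j₀, hj₀⟩ := hex
  obtain ⟨j, -, hj⟩ := Finset.exists_max_image Finset.univ (fun j => |v j|)
    ⟨j₀, Finset.mem_univ _⟩
  have hvj : 0 < |v j| := lt_of_lt_of_le (abs_pos.mpr hj₀) (hj j₀ (Finset.mem_univ _))
  have heqj : ∑ k, M j k * v k = μ * v j := by
    have hcf := congrFun heq j
    simpa [Matrix.mulVec, dotProduct] using hcf
  have h1 : |μ| * |v j| ≤ (∑ k, |M j k|) * |v j| := by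
    rw [← abs_mul, ← heqj]
    calc |∑ k, M j k * v k| ≤ ∑ k, |M j k * v k| := Finset.abs_sum_le_sum_abs _ _
      _ ≤ ∑ k, |M j k| * |v j| := by
          apply Finset.sum_le_sum; intro k _
          rw [abs_mul]
          exact mul_le_mul_of_nonneg_left (hj k (Finset.mem_univ _)) (abs_nonneg _)
      _ = (∑ k, |M j k|) * |v j| := by rw [← Finset.sum_mul]
  have h2 : |μ| ≤ ∑ k, |M j k| := le_of_mul_le_mul_right h1 hvj
  calc μ ≤ |μ| := le_abs_self μ
    _ ≤ ∑ k, |M j k| := h2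
    _ ≤ ∑ j, ∑ k, |M j k| :=
        Finset.single_le_sum (f := fun j => ∑ k, |M j k|)
          (fun j _ => Finset.sum_nonneg fun k _ => abs_nonneg _) (Finset.mem_univ j)

end StmtAux

open StmtAux Finset

theorem stmt_12 (n : ℕ) (hn : 2 ≤ n) :
    frobSq (Z n) < (specNorm (Z n)) ^ 2 + (16 / 25) * ((n : ℝ) - 1) := by
  classical
  have hZ : (Z n).IsHermitian :=
    Matrix.ext fun i j => by
      rw [Matrix.conjTranspose_apply, star_trivial]
      exact Zsymm n i j
  have hT : (Z n)ᵀ = Z n := Matrix.ext fun i j => by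
    rw [Matrix.transpose_apply]; exact Zsymm n i j
  set lam := hZ.eigenvalues with hlam
  -- frobenius norm = trace (Z * Z)
  have hfrob : frobSq (Z n) = Matrix.trace (Z n * Z n) := by
    unfold frobSq Matrix.trace
    simp only [Matrix.diag_apply, Matrix.mul_apply]
    refine Finset.sum_congr rfl fun i _ => Finset.sum_congr rfl fun j _ => ?_
    rw [Zsymm n i j]
    exact pow_two _
  -- trace = sum of squared eigenvalues
  set U : Matrix (Fin n) (Fin n) ℝ := (hZ.eigenvectorUnitary : Matrix (Fin n) (Fin n) ℝ) with hU_def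
  have hsp : Z n = U * Matrix.diagonal lam * star U := by
    have h := hZ.spectral_theorem
    rwa [RCLike.ofReal_real_eq_id, Function.id_comp] at h
  have hUU : star U * U = 1 := Matrix.mem_unitaryGroup_iff'.mp hZ.eigenvectorUnitary.2
  have htr : Matrix.trace (Z n * Z n) = ∑ i, (lam i)^2 := by
    calc Matrix.trace (Z n * Z n)
        = Matrix.trace (U * Matrix.diagonal lam * star U * (U * Matrix.diagonal lam * star U)) := by
          rw [← hsp]
      _ = Matrix.trace (U * (Matrix.diagonal lam * ((star U * U) * (Matrix.diagonal lam * star U)))) := by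
          simp only [Matrix.mul_assoc]
      _ = Matrix.trace (U * (Matrix.diagonal lam * (Matrix.diagonal lam * star U))) := by
          rw [hUU, Matrix.one_mul]
      _ = Matrix.trace (Matrix.diagonal lam * (Matrix.diagonal lam * star U) * U) :=
          Matrix.trace_mul_comm _ _
      _ = Matrix.trace (Matrix.diagonal lam * Matrix.diagonal lam * (star U * U)) := by
          simp only [Matrix.mul_assoc]
      _ = Matrix.trace (Matrix.diagonal lam * Matrix.diagonal lam) := by
          rw [hUU, Matrix.mul_one]
      _ = ∑ i, (lam i)^2 := by
          rw [Matrix.diagonal_mul_diagonal, Matrix.trace_diagonal]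
          exact Finset.sum_congr rfl fun i _ => (pow_two _).symm
  -- eigen facts
  have heig : ∀ i, (Z n).mulVec (⇑(hZ.eigenvectorBasis i) : Fin n → ℝ)
      = lam i • (⇑(hZ.eigenvectorBasis i) : Fin n → ℝ) :=
    fun i => hZ.mulVec_eigenvectorBasis i
  have hortho : ∀ i j, (⇑(hZ.eigenvectorBasis i) : Fin n → ℝ) ⬝ᵥ ⇑(hZ.eigenvectorBasis j)
      = if i = j then 1 else 0 := by
    intro i j
    have h := (orthonormal_iff_ite.mp hZ.eigenvectorBasis.orthonormal) i j
    simpa [PiLp.inner_apply, RCLike.inner_apply, dotProduct, mul_comm] using h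
  have hv_ne : ∀ i, (⇑(hZ.eigenvectorBasis i) : Fin n → ℝ) ≠ 0 := by
    intro i hcontra
    have h := hortho i i
    rw [hcontra, if_pos rfl] at h
    simp [dotProduct] at h
  have hlamnn : ∀ i, 0 ≤ lam i := by
    intro i
    have h1 : (⇑(hZ.eigenvectorBasis i) : Fin n → ℝ) ⬝ᵥ
        (Z n).mulVec (⇑(hZ.eigenvectorBasis i)) = lam i := by
      rw [heig i, dotProduct_smul, smul_eq_mul, hortho i i, if_pos rfl, mul_one]
    rw [← h1]
    exact QF_nonneg n _
  -- spectral norm lower bound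
  have heigsq : ∀ i, HasEigen ((Z n)ᵀ * Z n) ((lam i)^2) := by
    intro i
    refine ⟨⇑(hZ.eigenvectorBasis i), hv_ne i, ?_⟩
    rw [hT, ← Matrix.mulVec_mulVec, heig i, Matrix.mulVec_smul, heig i, smul_smul, ← sq]
  have hbdd : BddAbove {s : ℝ | ∃ μ : ℝ, HasEigen ((Z n)ᵀ * Z n) μ ∧ s = Real.sqrt μ} := by
    refine ⟨Real.sqrt (∑ j, ∑ k, |((Z n)ᵀ * Z n) j k|), ?_⟩
    rintro s ⟨μ, hμ, rfl⟩
    exact Real.sqrt_le_sqrt (eig_bound _ μ hμ)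
  have hge : ∀ i, |lam i| ≤ specNorm (Z n) := by
    intro i
    exact le_csSup hbdd ⟨(lam i)^2, heigsq i, (Real.sqrt_sq_eq_abs _).symm⟩
  have i1 : Fin n := ⟨0, by omega⟩
  have hspecsq : ∀ i, (lam i)^2 ≤ (specNorm (Z n))^2 := by
    intro i
    rw [← sq_abs]
    exact pow_le_pow_left₀ (abs_nonneg _) (hge i) 2
  -- the argmax eigenvalue
  obtain ⟨i₀, -, hmax⟩ := Finset.exists_max_image Finset.univ (fun i => (lam i)^2)
    ⟨i1, Finset.mem_univ _⟩
  -- all other eigenvalues are < 4/5 in square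
  have hsmall : ∀ i ∈ Finset.univ.erase i₀, (lam i)^2 < 16/25 := by
    intro i hi
    have hii : i ≠ i₀ := (Finset.mem_erase.mp hi).1
    by_contra hcon
    push_neg at hcon
    have hlami : 4/5 ≤ lam i := by nlinarith [hlamnn i]
    have hlam0 : 4/5 ≤ lam i₀ := by
      have := hmax i (Finset.mem_univ _)
      nlinarith [hlamnn i₀]
    set a : Fin n → ℝ := fun k => (-φ)^(n - 1 - k.1) with ha_def
    set vi : Fin n → ℝ := ⇑(hZ.eigenvectorBasis i) with hvi_def
    set v0 : Fin n → ℝ := ⇑(hZ.eigenvectorBasis i₀) with hv0_def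
    have hvivi : vi ⬝ᵥ vi = 1 := by have h := hortho i i; rwa [if_pos rfl] at h
    have hv0v0 : v0 ⬝ᵥ v0 = 1 := by have h := hortho i₀ i₀; rwa [if_pos rfl] at h
    have hviv0 : vi ⬝ᵥ v0 = 0 := by have h := hortho i i₀; rwa [if_neg hii] at h
    have hv0vi : v0 ⬝ᵥ vi = 0 := by
      have h := hortho i₀ i; rwa [if_neg (Ne.symm hii)] at h
    set c1 : ℝ := a ⬝ᵥ v0 with hc1_def
    set c2 : ℝ := a ⬝ᵥ vi with hc2_def
    set x : Fin n → ℝ := c1 • vi - c2 • v0 with hxdef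
    have hax : ∑ k : Fin n, (-φ)^(n-1-k.1) * x k = 0 := by
      have hrfl : ∑ k : Fin n, (-φ)^(n-1-k.1) * x k = a ⬝ᵥ x := rfl
      rw [hrfl, hxdef, dotProduct_sub, dotProduct_smul, dotProduct_smul,
        smul_eq_mul, smul_eq_mul, ← hc1_def, ← hc2_def]
      ring
    by_cases hx0 : x = 0
    · -- then c1 = 0 and v0 ⊥ a ; v0 gives the contradiction
      have h1 : vi ⬝ᵥ x = c1 := by
        rw [hxdef, dotProduct_sub, dotProduct_smul, dotProduct_smul,
          smul_eq_mul, smul_eq_mul, hvivi, hviv0]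
        ring
      have hc1 : c1 = 0 := by rw [← h1, hx0, dotProduct_zero]
      have hperp : ∑ k : Fin n, (-φ)^(n-1-k.1) * v0 k = 0 := by
        have hrfl : ∑ k : Fin n, (-φ)^(n-1-k.1) * v0 k = a ⬝ᵥ v0 := rfl
        rw [hrfl, ← hc1_def]
        exact hc1
      have hk0 := keyQF n v0 (hv_ne i₀) hperp
      have hv0Z : v0 ⬝ᵥ (Z n).mulVec v0 = lam i₀ := by
        rw [hv0_def, heig i₀, dotProduct_smul, smul_eq_mul, ← hv0_def, hv0v0, mul_one]
      rw [hv0Z, hv0v0] at hk0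
      linarith
    · have hkey := keyQF n x hx0 hax
      have hZx : (Z n).mulVec x = (c1 * lam i) • vi - (c2 * lam i₀) • v0 := by
        rw [hxdef, Matrix.mulVec_sub, Matrix.mulVec_smul, Matrix.mulVec_smul,
          hvi_def, hv0_def, heig i, heig i₀, smul_smul, smul_smul]
      have hxZx : x ⬝ᵥ (Z n).mulVec x = c1^2 * lam i + c2^2 * lam i₀ := by
        rw [hZx, hxdef, sub_dotProduct, smul_dotProduct, smul_dotProduct,
          dotProduct_sub, dotProduct_sub,
          dotProduct_smul, dotProduct_smul, dotProduct_smul,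
          dotProduct_smul, smul_eq_mul, smul_eq_mul, smul_eq_mul, smul_eq_mul,
          smul_eq_mul, smul_eq_mul, hvivi, hv0v0, hviv0, hv0vi]
        ring
      have hxx : x ⬝ᵥ x = c1^2 + c2^2 := by
        rw [hxdef, sub_dotProduct, smul_dotProduct, smul_dotProduct,
          dotProduct_sub, dotProduct_sub,
          dotProduct_smul, dotProduct_smul, dotProduct_smul,
          dotProduct_smul, smul_eq_mul, smul_eq_mul, smul_eq_mul, smul_eq_mul,
          smul_eq_mul, smul_eq_mul, hvivi, hv0v0, hviv0, hv0vi]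
        ring
      rw [hxZx, hxx] at hkey
      nlinarith [sq_nonneg c1, sq_nonneg c2]
  -- put it together
  have hnonempty : (Finset.univ.erase i₀ : Finset (Fin n)).Nonempty := by
    rw [← Finset.card_pos, Finset.card_erase_of_mem (Finset.mem_univ _), Finset.card_univ,
      Fintype.card_fin]
    omega
  have hsplit : frobSq (Z n) = (lam i₀)^2 + ∑ i ∈ Finset.univ.erase i₀, (lam i)^2 := by
    rw [hfrob, htr, ← Finset.add_sum_erase Finset.univ _ (Finset.mem_univ i₀)]
  have herase : ∑ i ∈ Finset.univ.erase i₀, (lam i)^2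
      < ∑ _i ∈ Finset.univ.erase i₀, (16/25 : ℝ) :=
    Finset.sum_lt_sum_of_nonempty hnonempty hsmall
  have hconst : ∑ _i ∈ Finset.univ.erase i₀, (16/25 : ℝ) = (16/25) * ((n:ℝ) - 1) := by
    rw [Finset.sum_const, Finset.card_erase_of_mem (Finset.mem_univ _), Finset.card_univ,
      Fintype.card_fin, nsmul_eq_mul, Nat.cast_sub (by omega)]
    push_cast
    ring
  have := hspecsq i₀
  rw [hsplit]
  rw [hconst] at herase
  linarith
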